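/- arXiv:2409.02289 — 3 statements merged into one kernel-verified Lean document; each statement's English description precedes it below -/
import Mathlib

section
/- For any consistent LE-ALC ABox A and any individual names b, y occurring in A, the tableaux completion of A ∪ {b I y} equals Ā ∪ {b I y}, where Ā is the tableaux completion of A. -/
/-!
Common formal infrastructure for the description logic LE-ALC:
syntax of concepts, individual names, ABox terms, the tableaux expansion
rules and completion, and the polarity-based (enriched formal context)
semantics.
-/

namespace LEALC

/-- LE-ALC concepts: `C ::= D | C₁ ∧ C₂ | C₁ ∨ C₂ | [R_□]C | ⟨R_◇⟩C`. -/
inductive Cpt : Type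
  | atom : ℕ → Cpt
  | meet : Cpt → Cpt → Cpt
  | join : Cpt → Cpt → Cpt
  | box  : Cpt → Cpt
  | dia  : Cpt → Cpt
  deriving DecidableEq

/-- Object individual names: ordinary names from `OBJ`, classifying objects
`a_C`, and the prefixed names `◇b`, `◆b` generated by the tableaux. -/
inductive ObName : Type
  | base : ℕ → ObName
  | cls  : Cpt → ObName
  | dia  : ObName → ObName
  | bdia : ObName → ObName
  deriving DecidableEq

/-- Feature individual names: ordinary names from `FEAT`, classifying features
`x_C`, and the prefixed names `□y`, `■y` generated by the tableaux. -/
inductive FtName : Type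
  | base : ℕ → FtName
  | cls  : Cpt → FtName
  | box  : FtName → FtName
  | bbox : FtName → FtName
  deriving DecidableEq

/-- `◇b`, with the identification `◇a_C = a_{◇C}`. -/
def ObName.diaS : ObName → ObName
  | .cls C => .cls (.dia C)
  | b => .dia b

/-- `□y`, with the identification `□x_C = x_{□C}`. -/
def FtName.boxS : FtName → FtName
  | .cls C => .cls (.box C)
  | y => .box y

/-- Positive (unnegated) ABox terms:
`a I x`, `a R_□ x`, `x R_◇ a`, `a : C`, `x :: C`. -/
inductive PTerm : Type
  | rI   : ObName → FtName → PTerm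
  | rbox : ObName → FtName → PTerm
  | rdia : FtName → ObName → PTerm
  | mem  : ObName → Cpt → PTerm
  | fmem : FtName → Cpt → PTerm
  deriving DecidableEq

/-- ABox terms: a positive term or its negation. -/
inductive Term : Type
  | pos : PTerm → Term
  | neg : PTerm → Term
  deriving DecidableEq

/-- The relational terms are `a I x`, `a R_□ x` and `x R_◇ a`. -/
def PTerm.IsRelational : PTerm → Prop
  | .rI _ _ => True
  | .rbox _ _ => True
  | .rdia _ _ => True
  | .mem _ _ => False
  | .fmem _ _ => False

/-- Subformulas (subconcepts) of a concept. -/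
def Cpt.subs : Cpt → Finset Cpt
  | .atom n => {Cpt.atom n}
  | .meet C₁ C₂ => insert (Cpt.meet C₁ C₂) (C₁.subs ∪ C₂.subs)
  | .join C₁ C₂ => insert (Cpt.join C₁ C₂) (C₁.subs ∪ C₂.subs)
  | .box C => insert (Cpt.box C) C.subs
  | .dia C => insert (Cpt.dia C) C.subs

/-- The concepts occurring in a term (subformulas of the concept of a
(possibly negated) membership assertion). -/
def Term.cpts : Term → Finset Cpt
  | .pos (.mem _ C) => C.subs
  | .pos (.fmem _ C) => C.subs
  | .neg (.mem _ C) => C.subs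
  | .neg (.fmem _ C) => C.subs
  | _ => ∅

/-- The concept `C` occurs in the set of terms `A`. -/
def Occurs (C : Cpt) (A : Set Term) : Prop := ∃ t ∈ A, C ∈ t.cpts

def PTerm.objs : PTerm → List ObName
  | .rI b _ => [b]
  | .rbox b _ => [b]
  | .rdia _ b => [b]
  | .mem b _ => [b]
  | .fmem _ _ => []

def PTerm.feats : PTerm → List FtName
  | .rI _ y => [y]
  | .rbox _ y => [y]
  | .rdia y _ => [y]
  | .mem _ _ => []
  | .fmem y _ => [y]

def Term.objs : Term → List ObName
  | .pos t => t.objs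
  | .neg t => t.objs

def Term.feats : Term → List FtName
  | .pos t => t.feats
  | .neg t => t.feats

/-- The object name `b` occurs in the set of terms `S`. -/
def ObOccurs (b : ObName) (S : Set Term) : Prop := ∃ t ∈ S, b ∈ t.objs

/-- The feature name `y` occurs in the set of terms `S`. -/
def FtOccurs (y : FtName) (S : Set Term) : Prop := ∃ t ∈ S, y ∈ t.feats

def ObName.IsBase (b : ObName) : Prop := ∃ n, b = ObName.base n
def FtName.IsBase (y : FtName) : Prop := ∃ n, y = FtName.base n

/-- A term all of whose individual names are ordinary (non-generated) names. -/
def Term.Plain (t : Term) : Prop :=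
  (∀ b ∈ t.objs, b.IsBase) ∧ (∀ y ∈ t.feats, y.IsBase)

/-- An ABox is a set of terms over the ordinary individual names `OBJ`/`FEAT`
(the generated names `a_C`, `x_C`, `◇b`, `◆b`, `□y`, `■y` are fresh). -/
def ABoxWF (A : Set Term) : Prop := ∀ t ∈ A, t.Plain

def Cpt.csize : Cpt → ℕ
  | .atom _ => 1
  | .meet C₁ C₂ => C₁.csize + C₂.csize + 1
  | .join C₁ C₂ => C₁.csize + C₂.csize + 1
  | .box C => C.csize + 1
  | .dia C => C.csize + 1

def PTerm.psize : PTerm → ℕ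
  | .rI _ _ => 1
  | .rbox _ _ => 1
  | .rdia _ _ => 1
  | .mem _ C => C.csize + 1
  | .fmem _ C => C.csize + 1

def Term.tsize : Term → ℕ
  | .pos t => t.psize + 1
  | .neg t => t.psize + 2

/-- The size `|A|` of an ABox. -/
def aboxSize (A : Finset Term) : ℕ := A.sum Term.tsize

/-- Box-depth of a concept. -/
def Cpt.bd : Cpt → ℕ
  | .atom _ => 0
  | .meet C₁ C₂ => max C₁.bd C₂.bd
  | .join C₁ C₂ => max C₁.bd C₂.bd
  | .box C => C.bd + 1
  | .dia C => C.bd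

/-- Diamond-depth of a concept. -/
def Cpt.dd : Cpt → ℕ
  | .atom _ => 0
  | .meet C₁ C₂ => max C₁.dd C₂.dd
  | .join C₁ C₂ => max C₁.dd C₂.dd
  | .box C => C.dd
  | .dia C => C.dd + 1

/-- Box-depth of an object name (names in the input ABox have depth 0,
prefixing changes the depth, classifying names inherit depths from their
concept). -/
def ObName.bd : ObName → ℤ
  | .base _ => 0
  | .cls C => -(C.bd : ℤ)
  | .dia b => b.bd
  | .bdia b => b.bd + 1

/-- Diamond-depth of an object name. -/
def ObName.dd : ObName → ℤ
  | .base _ => 0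
  | .cls C => -(C.dd : ℤ)
  | .dia b => b.dd + 1
  | .bdia b => b.dd

/-- Box-depth of a feature name. -/
def FtName.bd : FtName → ℤ
  | .base _ => 0
  | .cls C => -(C.bd : ℤ)
  | .box y => y.bd + 1
  | .bbox y => y.bd

/-- Diamond-depth of a feature name. -/
def FtName.dd : FtName → ℤ
  | .base _ => 0
  | .cls C => -(C.dd : ℤ)
  | .box y => y.dd
  | .bbox y => y.dd + 1

/-- All concepts occurring in an ABox. -/
def aboxCpts (A : Finset Term) : Finset Cpt := A.biUnion Term.cpts

/-- `□_D(A)`: maximal box-depth of a concept occurring in `A`. -/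
def aboxBd (A : Finset Term) : ℕ := (aboxCpts A).sup Cpt.bd

/-- `◇_D(A)`: maximal diamond-depth of a concept occurring in `A`. -/
def aboxDd (A : Finset Term) : ℕ := (aboxCpts A).sup Cpt.dd

/-- One-step derivability: `Deriv E A S t` holds iff the term `t` can be
added by applying one of the LE-ALC tableaux expansion rules (or the extra
rule `E`) to the current set of terms `S`, `A` being the input ABox (used
for the side conditions of the creation and inverse rules). -/
inductive Deriv (E : Term → Term → Prop) (A S : Set Term) : Term → Prop
  /-- creation rule -/
  | create_a {C : Cpt} : Occurs C A → Deriv E A S (.pos (.mem (.cls C) C))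
  | create_x {C : Cpt} : Occurs C A → Deriv E A S (.pos (.fmem (.cls C) C))
  /-- basic rule -/
  | basic {b y C} : Term.pos (.mem b C) ∈ S → Term.pos (.fmem y C) ∈ S →
      Deriv E A S (.pos (.rI b y))
  /-- rules for the logical connectives -/
  | andA_l {b C₁ C₂} : Term.pos (.mem b (.meet C₁ C₂)) ∈ S → Deriv E A S (.pos (.mem b C₁))
  | andA_r {b C₁ C₂} : Term.pos (.mem b (.meet C₁ C₂)) ∈ S → Deriv E A S (.pos (.mem b C₂))
  | orX_l {y C₁ C₂} : Term.pos (.fmem y (.join C₁ C₂)) ∈ S → Deriv E A S (.pos (.fmem y C₁))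
  | orX_r {y C₁ C₂} : Term.pos (.fmem y (.join C₁ C₂)) ∈ S → Deriv E A S (.pos (.fmem y C₂))
  | boxR {b y C} : Term.pos (.mem b (.box C)) ∈ S → Term.pos (.fmem y C) ∈ S →
      Deriv E A S (.pos (.rbox b y))
  | diaR {b y C} : Term.pos (.fmem y (.dia C)) ∈ S → Term.pos (.mem b C) ∈ S →
      Deriv E A S (.pos (.rdia y b))
  /-- inverse rules for the connectives -/
  | andA_inv {b C₁ C₂} : Term.pos (.mem b C₁) ∈ S → Term.pos (.mem b C₂) ∈ S →
      Occurs (.meet C₁ C₂) A → Deriv E A S (.pos (.mem b (.meet C₁ C₂)))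
  | orX_inv {y C₁ C₂} : Term.pos (.fmem y C₁) ∈ S → Term.pos (.fmem y C₂) ∈ S →
      Occurs (.join C₁ C₂) A → Deriv E A S (.pos (.fmem y (.join C₁ C₂)))
  /-- adjunction rules -/
  | adj_box_l {b y} : Term.pos (.rbox b y) ∈ S → Deriv E A S (.pos (.rI (.bdia b) y))
  | adj_box_r {b y} : Term.pos (.rbox b y) ∈ S → Deriv E A S (.pos (.rI b (FtName.boxS y)))
  | adj_dia_l {b y} : Term.pos (.rdia y b) ∈ S → Deriv E A S (.pos (.rI (ObName.diaS b) y))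
  | adj_dia_r {b y} : Term.pos (.rdia y b) ∈ S → Deriv E A S (.pos (.rI b (.bbox y)))
  /-- I-compatibility rules -/
  | icomp_box {b y} : Term.pos (.rI b (FtName.boxS y)) ∈ S → Deriv E A S (.pos (.rbox b y))
  | icomp_bbox {b y} : Term.pos (.rI b (.bbox y)) ∈ S → Deriv E A S (.pos (.rdia y b))
  | icomp_dia {b y} : Term.pos (.rI (ObName.diaS b) y) ∈ S → Deriv E A S (.pos (.rdia y b))
  | icomp_bdia {b y} : Term.pos (.rI (.bdia b) y) ∈ S → Deriv E A S (.pos (.rbox b y))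
  /-- basic rules for negative assertions -/
  | neg_b {b C} : Term.neg (.mem b C) ∈ S → Deriv E A S (.neg (.rI b (.cls C)))
  | neg_x {y C} : Term.neg (.fmem y C) ∈ S → Deriv E A S (.neg (.rI (.cls C) y))
  /-- appending rules -/
  | app_x {b C} : Term.pos (.rI b (.cls C)) ∈ S → Deriv E A S (.pos (.mem b C))
  | app_a {y C} : Term.pos (.rI (.cls C) y) ∈ S → Deriv E A S (.pos (.fmem y C))
  /-- an additional expansion rule `E` -/
  | extra {t t'} : E t t' → t ∈ S → Deriv E A S t'

/-- `S` contains `A` and is closed under the expansion rules. -/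
def RuleClosed (E : Term → Term → Prop) (A S : Set Term) : Prop :=
  A ⊆ S ∧ ∀ t, Deriv E A S t → t ∈ S

/-- The tableaux completion `Ā` of the ABox `A` (w.r.t. the LE-ALC expansion
rules together with the extra rule `E`): the least set of terms containing
`A` and closed under the rules. -/
def Compl (E : Term → Term → Prop) (A : Set Term) : Set Term :=
  {t | ∀ S : Set Term, RuleClosed E A S → t ∈ S}

/-- No extra expansion rule: the plain LE-ALC tableaux algorithm. -/
def noExt : Term → Term → Prop := fun _ _ => False

/-- One expansion step of the tableaux algorithm: a rule is applied to the
current set `B` and adds a new term. -/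
def Step (E : Term → Term → Prop) (A B B' : Set Term) : Prop :=
  ∃ t, Deriv E A B t ∧ t ∉ B ∧ B' = insert t B

/-- A clash: some relational term occurs together with its negation. -/
def HasClash (S : Set Term) : Prop :=
  ∃ β : PTerm, β.IsRelational ∧ Term.pos β ∈ S ∧ Term.neg β ∈ S

/-- The separation rule `SA(b,d)`: from `b I x` infer `d I x`. -/
def ruleSA (b d : ObName) : Term → Term → Prop :=
  fun t t' => ∃ x : FtName, t = Term.pos (.rI b x) ∧ t' = Term.pos (.rI d x)

/-- The separation rule `SX(y,z)`: from `a I y` infer `a I z`. -/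
def ruleSX (y z : FtName) : Term → Term → Prop :=
  fun t t' => ∃ a : ObName, t = Term.pos (.rI a y) ∧ t' = Term.pos (.rI a z)

/-- The rule `SA(R_□,R_◇,b)`: from `b R_□ y` infer `y R_◇ b`. -/
def ruleSAR (b : ObName) : Term → Term → Prop :=
  fun t t' => ∃ x : FtName, t = Term.pos (.rbox b x) ∧ t' = Term.pos (.rdia x b)

/-- The rule `SX(R_◇,R_□,y)`: from `y R_◇ a` infer `a R_□ y`. -/
def ruleSXR (y : FtName) : Term → Term → Prop :=
  fun t t' => ∃ a : ObName, t = Term.pos (.rdia y a) ∧ t' = Term.pos (.rbox a y)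

/-! ## Semantics: enriched formal contexts -/

/-- `I^{(1)}[B]` -/
def gup {O F : Type} (I : O → F → Prop) (B : Set O) : Set F := {x | ∀ a ∈ B, I a x}

/-- `I^{(0)}[Y]` -/
def gdn {O F : Type} (I : O → F → Prop) (Y : Set F) : Set O := {a | ∀ x ∈ Y, I a x}

/-- Galois-stability for sets of objects. -/
def StableO {O F : Type} (I : O → F → Prop) (B : Set O) : Prop := gdn I (gup I B) = B

/-- Galois-stability for sets of features. -/
def StableF {O F : Type} (I : O → F → Prop) (Y : Set F) : Prop := gup I (gdn I Y) = Y

/-- An interpretation of LE-ALC: an enriched formal context `(Ob, Ft, I, R_□, R_◇)`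
together with interpretations of the individual names and of the atomic
concepts (an atomic concept is interpreted by the formal concept whose
extent is `vA n` and whose intent is `gup I (vA n)`). -/
structure Model where
  Ob : Type
  Ft : Type
  I : Ob → Ft → Prop
  Rb : Ob → Ft → Prop
  Rd : Ft → Ob → Prop
  oi : ObName → Ob
  fi : FtName → Ft
  vA : ℕ → Set Ob

/-- Intent of the interpretation of an atomic concept. -/
def Model.vX (M : Model) (n : ℕ) : Set M.Ft := gup M.I (M.vA n)

/-- Well-formedness of an interpretation: `R_□` and `R_◇` are `I`-compatible,
and atomic concepts are interpreted by formal concepts. -/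
def Model.Good (M : Model) : Prop :=
  (∀ x, StableO M.I {a | M.Rb a x}) ∧
  (∀ a, StableF M.I {x | M.Rb a x}) ∧
  (∀ a, StableF M.I {x | M.Rd x a}) ∧
  (∀ x, StableO M.I {a | M.Rd x a}) ∧
  (∀ n, StableO M.I (M.vA n))

/-- The interpretation `C^M = (extent, intent)` of a concept. -/
def Model.ci (M : Model) : Cpt → Set M.Ob × Set M.Ft
  | .atom n => (M.vA n, M.vX n)
  | .meet C₁ C₂ =>
      ((Model.ci M C₁).1 ∩ (Model.ci M C₂).1,
        gup M.I ((Model.ci M C₁).1 ∩ (Model.ci M C₂).1))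
  | .join C₁ C₂ =>
      (gdn M.I ((Model.ci M C₁).2 ∩ (Model.ci M C₂).2),
        (Model.ci M C₁).2 ∩ (Model.ci M C₂).2)
  | .box C =>
      (gdn M.Rb (Model.ci M C).2, gup M.I (gdn M.Rb (Model.ci M C).2))
  | .dia C =>
      (gdn M.I (gup (fun a x => M.Rd x a) (Model.ci M C).1),
        gup (fun a x => M.Rd x a) (Model.ci M C).1)

/-- Satisfaction of positive ABox terms. -/
def Model.SatP (M : Model) : PTerm → Prop
  | .rI b y => M.I (M.oi b) (M.fi y)
  | .rbox b y => M.Rb (M.oi b) (M.fi y)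
  | .rdia y b => M.Rd (M.fi y) (M.oi b)
  | .mem b C => M.oi b ∈ (Model.ci M C).1
  | .fmem y C => M.fi y ∈ (Model.ci M C).2

/-- Satisfaction of ABox terms. -/
def Model.Sat (M : Model) : Term → Prop
  | .pos t => M.SatP t
  | .neg t => ¬ M.SatP t

/-- `M` is a model of the set of terms `A`. -/
def Model.SatAll (M : Model) (A : Set Term) : Prop := ∀ t ∈ A, M.Sat t

/-- An ABox is consistent iff it has a model. -/
def Consistent (A : Set Term) : Prop := ∃ M : Model, M.Good ∧ M.SatAll A

/-- `A ⊨ t`: every model of `A` satisfies `t`. -/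
def Entails (A : Set Term) (t : Term) : Prop :=
  ∀ M : Model, M.Good → M.SatAll A → M.Sat t

/-- `A ⊨ C₁ ⊑ C₂`: in every model of `A`, `C₁^M ≤ C₂^M` in the concept lattice. -/
def EntailsSub (A : Set Term) (C₁ C₂ : Cpt) : Prop :=
  ∀ M : Model, M.Good → M.SatAll A → (Model.ci M C₁).1 ⊆ (Model.ci M C₂).1

/-! ### Semantic concept operations -/

/-- The operation `[R_□]` on (extent, intent) pairs. -/
def Model.cbox (M : Model) (c : Set M.Ob × Set M.Ft) : Set M.Ob × Set M.Ft :=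
  (gdn M.Rb c.2, gup M.I (gdn M.Rb c.2))

/-- The operation `⟨R_◇⟩` on (extent, intent) pairs. -/
def Model.cdia (M : Model) (c : Set M.Ob × Set M.Ft) : Set M.Ob × Set M.Ft :=
  (gdn M.I (gup (fun a x => M.Rd x a) c.1), gup (fun a x => M.Rd x a) c.1)

/-- The operation `◆` (left adjoint of `[R_□]`). -/
def Model.cbdia (M : Model) (c : Set M.Ob × Set M.Ft) : Set M.Ob × Set M.Ft :=
  (gdn M.I (gup M.Rb c.1), gup M.Rb c.1)

/-- The operation `■` (right adjoint of `⟨R_◇⟩`). -/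
def Model.cbbox (M : Model) (c : Set M.Ob × Set M.Ft) : Set M.Ob × Set M.Ft :=
  (gdn (fun a x => M.Rd x a) c.2, gup M.I (gdn (fun a x => M.Rd x a) c.2))

/-- The concept `𝐚 = (a^{↑↓}, a^{↑})` generated by an object. -/
def Model.genO (M : Model) (a : M.Ob) : Set M.Ob × Set M.Ft :=
  (gdn M.I (gup M.I {a}), gup M.I {a})

/-- The concept `𝐱 = (x^{↓}, x^{↓↑})` generated by a feature. -/
def Model.genF (M : Model) (x : M.Ft) : Set M.Ob × Set M.Ft :=
  (gdn M.I {x}, gup M.I (gdn M.I {x}))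

/-- The concept companion `con(b)` of an object name, interpreted in `M`. -/
def Model.conO (M : Model) : ObName → Set M.Ob × Set M.Ft
  | .base n => M.genO (M.oi (.base n))
  | .cls C => M.genO (M.oi (.cls C))
  | .dia b => M.cdia (Model.conO M b)
  | .bdia b => M.cbdia (Model.conO M b)

/-- The concept companion `con(y)` of a feature name, interpreted in `M`. -/
def Model.conF (M : Model) : FtName → Set M.Ob × Set M.Ft
  | .base n => M.genF (M.fi (.base n))
  | .cls C => M.genF (M.fi (.cls C))
  | .box y => M.cbox (Model.conF M y)
  | .bbox y => M.cbbox (Model.conF M y)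

/-! ### The canonical model built from the tableaux completion -/

/-- Classical `dite`. -/
noncomputable def cdite {α : Sort*} (p : Prop) (f : p → α) (g : ¬ p → α) : α :=
  @dite α p (Classical.dec p) f g

/-- The canonical model built from the tableaux completion `Ā` of `A`:
its objects (resp. features) are the object (resp. feature) names occurring
in `Ā` (plus a dummy point interpreting the names not occurring in `Ā`),
every name occurring in `Ā` is interpreted by itself, the relations are read
off from `Ā`, and an atomic concept `D` is interpreted by the formal concept
`(x_D^↓, a_D^↑)`. -/
noncomputable def canModel (A : Finset Term) : Model where
  Ob := Option {b : ObName // ObOccurs b (Compl noExt ↑A)}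
  Ft := Option {y : FtName // FtOccurs y (Compl noExt ↑A)}
  I := fun o x => ∃ b y, o = some b ∧ x = some y ∧
        Term.pos (.rI b.1 y.1) ∈ Compl noExt ↑A
  Rb := fun o x => ∃ b y, o = some b ∧ x = some y ∧
        Term.pos (.rbox b.1 y.1) ∈ Compl noExt ↑A
  Rd := fun x o => ∃ b y, o = some b ∧ x = some y ∧
        Term.pos (.rdia y.1 b.1) ∈ Compl noExt ↑A
  oi := fun b => cdite (ObOccurs b (Compl noExt ↑A)) (fun h => some ⟨b, h⟩) (fun _ => none)
  fi := fun y => cdite (FtOccurs y (Compl noExt ↑A)) (fun h => some ⟨y, h⟩) (fun _ => none)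
  vA := fun n => {o | ∃ b, o = some b ∧
        Term.pos (.rI b.1 (.cls (.atom n))) ∈ Compl noExt ↑A}

/-! ### ◇-leading and □-leading concepts -/

/-- ◇-leading concepts. -/
inductive DiaLeading : Cpt → Prop
  | atom (n : ℕ) : DiaLeading (.dia (.atom n))
  | dia {C : Cpt} : DiaLeading C → DiaLeading (.dia C)
  | join {C : Cpt} (C₁ : Cpt) : DiaLeading C → DiaLeading (.join C C₁)
  | meet {C₁ C₂ : Cpt} : DiaLeading C₁ → DiaLeading C₂ → DiaLeading (.meet C₁ C₂)

/-- □-leading concepts. -/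
inductive BoxLeading : Cpt → Prop
  | atom (n : ℕ) : BoxLeading (.box (.atom n))
  | box {C : Cpt} : BoxLeading C → BoxLeading (.box C)
  | meet {C : Cpt} (C₁ : Cpt) : BoxLeading C → BoxLeading (.meet C C₁)
  | join {C₁ C₂ : Cpt} : BoxLeading C₁ → BoxLeading C₂ → BoxLeading (.join C₁ C₂)

/-!
A term `b I y` between ordinary names is the premise of no expansion rule: every rule with an
`I`-premise needs a generated name (`□y`, `■y`, `◇b`, `◆b`, `a_C` or `x_C`) in it. Nor does it
contain a concept, so it leaves the side conditions of the creation and inverse rules unchanged.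
Hence `Ā ∪ {b I y}` is already closed under the rules for `A ∪ {b I y}`.
-/

@[simp]
lemma FtName.boxS_ne_base (y : FtName) (n : ℕ) : y.boxS ≠ .base n := by
  cases y <;> simp [FtName.boxS]

@[simp]
lemma ObName.diaS_ne_base (b : ObName) (n : ℕ) : b.diaS ≠ .base n := by
  cases b <;> simp [ObName.diaS]

section Completion

variable {E : Term → Term → Prop}

lemma Deriv.mono {A A' S S' : Set Term} {t : Term} (hS : S ⊆ S')
    (hO : ∀ C, Occurs C A → Occurs C A') (hd : Deriv E A S t) : Deriv E A' S' t := by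
  cases hd with
  | create_a h => exact .create_a (hO _ h)
  | create_x h => exact .create_x (hO _ h)
  | basic h₁ h₂ => exact .basic (hS h₁) (hS h₂)
  | andA_l h => exact .andA_l (hS h)
  | andA_r h => exact .andA_r (hS h)
  | orX_l h => exact .orX_l (hS h)
  | orX_r h => exact .orX_r (hS h)
  | boxR h₁ h₂ => exact .boxR (hS h₁) (hS h₂)
  | diaR h₁ h₂ => exact .diaR (hS h₁) (hS h₂)
  | andA_inv h₁ h₂ h₃ => exact .andA_inv (hS h₁) (hS h₂) (hO _ h₃)
  | orX_inv h₁ h₂ h₃ => exact .orX_inv (hS h₁) (hS h₂) (hO _ h₃)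
  | adj_box_l h => exact .adj_box_l (hS h)
  | adj_box_r h => exact .adj_box_r (hS h)
  | adj_dia_l h => exact .adj_dia_l (hS h)
  | adj_dia_r h => exact .adj_dia_r (hS h)
  | icomp_box h => exact .icomp_box (hS h)
  | icomp_bbox h => exact .icomp_bbox (hS h)
  | icomp_dia h => exact .icomp_dia (hS h)
  | icomp_bdia h => exact .icomp_bdia (hS h)
  | neg_b h => exact .neg_b (hS h)
  | neg_x h => exact .neg_x (hS h)
  | app_x h => exact .app_x (hS h)
  | app_a h => exact .app_a (hS h)
  | extra he h => exact .extra he (hS h)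

lemma Deriv.of_insert_rI_base {A S : Set Term} {t : Term} {n m : ℕ}
    (hE : ∀ t', ¬ E (.pos (.rI (.base n) (.base m))) t')
    (hd : Deriv E A (insert (.pos (.rI (.base n) (.base m))) S) t) : Deriv E A S t := by
  have hS : ∀ {p}, p ∈ insert (.pos (.rI (.base n) (.base m))) S →
      p ≠ .pos (.rI (.base n) (.base m)) → p ∈ S :=
    Set.mem_of_mem_insert_of_ne
  cases hd with
  | create_a h => exact .create_a h
  | create_x h => exact .create_x h
  | basic h₁ h₂ => exact .basic (hS h₁ (by simp)) (hS h₂ (by simp))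
  | andA_l h => exact .andA_l (hS h (by simp))
  | andA_r h => exact .andA_r (hS h (by simp))
  | orX_l h => exact .orX_l (hS h (by simp))
  | orX_r h => exact .orX_r (hS h (by simp))
  | boxR h₁ h₂ => exact .boxR (hS h₁ (by simp)) (hS h₂ (by simp))
  | diaR h₁ h₂ => exact .diaR (hS h₁ (by simp)) (hS h₂ (by simp))
  | andA_inv h₁ h₂ h₃ => exact .andA_inv (hS h₁ (by simp)) (hS h₂ (by simp)) h₃
  | orX_inv h₁ h₂ h₃ => exact .orX_inv (hS h₁ (by simp)) (hS h₂ (by simp)) h₃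
  | adj_box_l h => exact .adj_box_l (hS h (by simp))
  | adj_box_r h => exact .adj_box_r (hS h (by simp))
  | adj_dia_l h => exact .adj_dia_l (hS h (by simp))
  | adj_dia_r h => exact .adj_dia_r (hS h (by simp))
  | icomp_box h => exact .icomp_box (hS h (by simp))
  | icomp_bbox h => exact .icomp_bbox (hS h (by simp))
  | icomp_dia h => exact .icomp_dia (hS h (by simp))
  | icomp_bdia h => exact .icomp_bdia (hS h (by simp))
  | neg_b h => exact .neg_b (hS h (by simp))
  | neg_x h => exact .neg_x (hS h (by simp))
  | app_x h => exact .app_x (hS h (by simp))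
  | app_a h => exact .app_a (hS h (by simp))
  | extra he h => exact .extra he (hS h (by rintro rfl; exact hE _ he))

lemma occurs_insert_iff_of_cpts_eq_empty {C : Cpt} {A : Set Term} {t : Term} (ht : t.cpts = ∅) :
    Occurs C (insert t A) ↔ Occurs C A := by
  simp [Occurs, ht]

lemma subset_compl (A : Set Term) : A ⊆ Compl E A :=
  fun _ ht _ hS => hS.1 ht

lemma compl_subset_of_ruleClosed {A S : Set Term} (hS : RuleClosed E A S) :
    Compl E A ⊆ S :=
  fun _ ht => ht S hS

lemma ruleClosed_compl (A : Set Term) : RuleClosed E A (Compl E A) :=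
  ⟨subset_compl A, fun _ hd _ hS =>
    hS.2 _ (hd.mono (compl_subset_of_ruleClosed hS) fun _ h => h)⟩

lemma compl_mono {A A' : Set Term} (h : A ⊆ A') : Compl E A ⊆ Compl E A' :=
  compl_subset_of_ruleClosed
    ⟨h.trans (subset_compl A'), fun _ hd =>
      (ruleClosed_compl A').2 _ (hd.mono subset_rfl fun _ ⟨t, ht, hC⟩ => ⟨t, h ht, hC⟩)⟩

theorem compl_insert_rI_base (A : Set Term) (n m : ℕ)
    (hE : ∀ t', ¬ E (.pos (.rI (.base n) (.base m))) t') :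
    Compl E (insert (.pos (.rI (.base n) (.base m))) A) =
      Compl E A ∪ {.pos (.rI (.base n) (.base m))} := by
  rw [Set.union_singleton]
  refine (compl_subset_of_ruleClosed ⟨Set.insert_subset_insert (subset_compl A), ?_⟩).antisymm
    (Set.insert_subset (subset_compl _ (Set.mem_insert _ _))
      (compl_mono (Set.subset_insert _ _)))
  intro t hd
  have hdA : Deriv E A (Compl E A) t :=
    (hd.of_insert_rI_base hE).mono subset_rfl fun _ => (occurs_insert_iff_of_cpts_eq_empty rfl).1
  exact Set.mem_insert_of_mem _ ((ruleClosed_compl A).2 t hdA)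

end Completion

theorem completion_add_I_general (A : Finset Term) (hwf : ABoxWF ↑A)
    (b : ObName) (y : FtName)
    (hb : ObOccurs b ↑A) (hy : FtOccurs y ↑A) :
    Compl noExt (insert (Term.pos (.rI b y)) ↑A) =
      Compl noExt ↑A ∪ {Term.pos (.rI b y)} := by
  obtain ⟨tb, htbA, htb⟩ := hb
  obtain ⟨n, rfl⟩ := (hwf tb htbA).1 b htb
  obtain ⟨ty, htyA, hty⟩ := hy
  obtain ⟨m, rfl⟩ := (hwf ty htyA).2 y hty
  exact compl_insert_rI_base _ n m fun _ h => h

/-- For any consistent LE-ALC ABox `A` and any individual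
names `b`, `y` occurring in `A`, the tableaux completion of `A ∪ {b I y}`
equals `Ā ∪ {b I y}`, where `Ā` is the tableaux completion of `A`. -/
theorem completion_add_I (A : Finset Term) (hwf : ABoxWF ↑A)
    (hcon : Consistent ↑A) (b : ObName) (y : FtName)
    (hb : ObOccurs b ↑A) (hy : FtOccurs y ↑A) :
    Compl noExt (insert (Term.pos (.rI b y)) ↑A) =
      Compl noExt ↑A ∪ {Term.pos (.rI b y)} :=
  completion_add_I_general A hwf b y hb hy

end LEALC
end

section
/- For any consistent LE-ALC ABox A and any individual names b, y occurring in A, the tableaux completion of A ∪ {b R_□ y} equals Ā ∪ {b R_□ y, ◆b I y, b I □y}, where Ā is the tableaux completion of A. -/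
/-!
Common formal infrastructure for the description logic LE-ALC:
syntax of concepts, individual names, ABox terms, the tableaux expansion
rules and completion, and the polarity-based (enriched formal context)
semantics.
-/

namespace LEALC

/-! ### Auxiliary lemmas for Statement 8 -/

lemma deriv_mono {E : Term → Term → Prop} {A S S' : Set Term} (hs : S ⊆ S')
    {t : Term} (hd : Deriv E A S t) : Deriv E A S' t := by
  cases hd with
  | create_a h => exact .create_a h
  | create_x h => exact .create_x h
  | basic h1 h2 => exact .basic (hs h1) (hs h2)
  | andA_l h => exact .andA_l (hs h)
  | andA_r h => exact .andA_r (hs h)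
  | orX_l h => exact .orX_l (hs h)
  | orX_r h => exact .orX_r (hs h)
  | boxR h1 h2 => exact .boxR (hs h1) (hs h2)
  | diaR h1 h2 => exact .diaR (hs h1) (hs h2)
  | andA_inv h1 h2 h3 => exact .andA_inv (hs h1) (hs h2) h3
  | orX_inv h1 h2 h3 => exact .orX_inv (hs h1) (hs h2) h3
  | adj_box_l h => exact .adj_box_l (hs h)
  | adj_box_r h => exact .adj_box_r (hs h)
  | adj_dia_l h => exact .adj_dia_l (hs h)
  | adj_dia_r h => exact .adj_dia_r (hs h)
  | icomp_box h => exact .icomp_box (hs h)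
  | icomp_bbox h => exact .icomp_bbox (hs h)
  | icomp_dia h => exact .icomp_dia (hs h)
  | icomp_bdia h => exact .icomp_bdia (hs h)
  | neg_b h => exact .neg_b (hs h)
  | neg_x h => exact .neg_x (hs h)
  | app_x h => exact .app_x (hs h)
  | app_a h => exact .app_a (hs h)
  | extra he h => exact .extra he (hs h)

lemma deriv_congr {E : Term → Term → Prop} {A A' S : Set Term}
    (h : ∀ C, Occurs C A' ↔ Occurs C A)
    {t : Term} (hd : Deriv E A' S t) : Deriv E A S t := by
  cases hd with
  | create_a hc => exact .create_a ((h _).1 hc)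
  | create_x hc => exact .create_x ((h _).1 hc)
  | basic h1 h2 => exact .basic h1 h2
  | andA_l h1 => exact .andA_l h1
  | andA_r h1 => exact .andA_r h1
  | orX_l h1 => exact .orX_l h1
  | orX_r h1 => exact .orX_r h1
  | boxR h1 h2 => exact .boxR h1 h2
  | diaR h1 h2 => exact .diaR h1 h2
  | andA_inv h1 h2 h3 => exact .andA_inv h1 h2 ((h _).1 h3)
  | orX_inv h1 h2 h3 => exact .orX_inv h1 h2 ((h _).1 h3)
  | adj_box_l h1 => exact .adj_box_l h1
  | adj_box_r h1 => exact .adj_box_r h1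
  | adj_dia_l h1 => exact .adj_dia_l h1
  | adj_dia_r h1 => exact .adj_dia_r h1
  | icomp_box h1 => exact .icomp_box h1
  | icomp_bbox h1 => exact .icomp_bbox h1
  | icomp_dia h1 => exact .icomp_dia h1
  | icomp_bdia h1 => exact .icomp_bdia h1
  | neg_b h1 => exact .neg_b h1
  | neg_x h1 => exact .neg_x h1
  | app_x h1 => exact .app_x h1
  | app_a h1 => exact .app_a h1
  | extra he h1 => exact .extra he h1

lemma compl_subset {E : Term → Term → Prop} {A S : Set Term}
    (h : RuleClosed E A S) : Compl E A ⊆ S :=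
  fun _ ht => ht S h

lemma compl_closed (E : Term → Term → Prop) (A : Set Term) :
    RuleClosed E A (Compl E A) := by
  constructor
  · intro t ht S hS
    exact hS.1 ht
  · intro t hd S hS
    exact hS.2 t (deriv_mono (compl_subset hS) hd)

lemma occurs_insert {t0 : Term} (h0 : t0.cpts = ∅) {A : Set Term} {C : Cpt} :
    Occurs C (insert t0 A) ↔ Occurs C A := by
  constructor
  · rintro ⟨t, ht, hc⟩
    rcases ht with rfl | ht
    · rw [h0] at hc; exact absurd hc (Finset.notMem_empty _)
    · exact ⟨t, ht, hc⟩
  · rintro ⟨t, ht, hc⟩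
    exact ⟨t, Set.mem_insert_of_mem _ ht, hc⟩

lemma closure_aux (A : Set Term) (nb ny : ℕ) :
    RuleClosed noExt
      (insert (Term.pos (.rbox (.base nb) (.base ny))) A)
      (Compl noExt A ∪
        {Term.pos (.rbox (.base nb) (.base ny)),
          Term.pos (.rI (.bdia (.base nb)) (.base ny)),
          Term.pos (.rI (.base nb) (FtName.boxS (.base ny)))}) := by
  have hC := compl_closed noExt A
  have hocc : ∀ C : Cpt,
      Occurs C (insert (Term.pos (.rbox (.base nb) (.base ny))) A) ↔
        Occurs C A := fun C => occurs_insert (t0 := Term.pos (.rbox (.base nb) (.base ny))) rfl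
  constructor
  · intro t ht
    rcases ht with rfl | ht
    · right; simp
    · exact Or.inl (hC.1 ht)
  · intro t hd
    have hd' := deriv_congr hocc hd
    clear hd
    cases hd' with
    | create_a hc => exact Or.inl (hC.2 _ (.create_a hc))
    | create_x hc => exact Or.inl (hC.2 _ (.create_x hc))
    | basic h1 h2 =>
        rcases h1 with h1 | h1
        · rcases h2 with h2 | h2
          · exact Or.inl (hC.2 _ (.basic h1 h2))
          · simp [FtName.boxS] at h2
        · simp [FtName.boxS] at h1
    | andA_l h1 =>
        rcases h1 with h1 | h1
        · exact Or.inl (hC.2 _ (.andA_l h1))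
        · simp [FtName.boxS] at h1
    | andA_r h1 =>
        rcases h1 with h1 | h1
        · exact Or.inl (hC.2 _ (.andA_r h1))
        · simp [FtName.boxS] at h1
    | orX_l h1 =>
        rcases h1 with h1 | h1
        · exact Or.inl (hC.2 _ (.orX_l h1))
        · simp [FtName.boxS] at h1
    | orX_r h1 =>
        rcases h1 with h1 | h1
        · exact Or.inl (hC.2 _ (.orX_r h1))
        · simp [FtName.boxS] at h1
    | boxR h1 h2 =>
        rcases h1 with h1 | h1
        · rcases h2 with h2 | h2
          · exact Or.inl (hC.2 _ (.boxR h1 h2))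
          · simp [FtName.boxS] at h2
        · simp [FtName.boxS] at h1
    | diaR h1 h2 =>
        rcases h1 with h1 | h1
        · rcases h2 with h2 | h2
          · exact Or.inl (hC.2 _ (.diaR h1 h2))
          · simp [FtName.boxS] at h2
        · simp [FtName.boxS] at h1
    | andA_inv h1 h2 h3 =>
        rcases h1 with h1 | h1
        · rcases h2 with h2 | h2
          · exact Or.inl (hC.2 _ (.andA_inv h1 h2 h3))
          · simp [FtName.boxS] at h2
        · simp [FtName.boxS] at h1
    | orX_inv h1 h2 h3 =>
        rcases h1 with h1 | h1
        · rcases h2 with h2 | h2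
          · exact Or.inl (hC.2 _ (.orX_inv h1 h2 h3))
          · simp [FtName.boxS] at h2
        · simp [FtName.boxS] at h1
    | @adj_box_l b' y' h1 =>
        rcases h1 with h1 | h1
        · exact Or.inl (hC.2 _ (.adj_box_l h1))
        · simp only [Set.mem_insert_iff, Set.mem_singleton_iff] at h1
          rcases h1 with h1 | h1 | h1 <;> simp_all [FtName.boxS]
    | @adj_box_r b' y' h1 =>
        rcases h1 with h1 | h1
        · exact Or.inl (hC.2 _ (.adj_box_r h1))
        · simp only [Set.mem_insert_iff, Set.mem_singleton_iff] at h1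
          rcases h1 with h1 | h1 | h1 <;> simp_all [FtName.boxS]
    | adj_dia_l h1 =>
        rcases h1 with h1 | h1
        · exact Or.inl (hC.2 _ (.adj_dia_l h1))
        · simp [FtName.boxS] at h1
    | adj_dia_r h1 =>
        rcases h1 with h1 | h1
        · exact Or.inl (hC.2 _ (.adj_dia_r h1))
        · simp [FtName.boxS] at h1
    | @icomp_box b' y' h1 =>
        rcases h1 with h1 | h1
        · exact Or.inl (hC.2 _ (.icomp_box h1))
        · simp only [Set.mem_insert_iff, Set.mem_singleton_iff] at h1
          cases y' <;> rcases h1 with h1 | h1 | h1 <;>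
            simp_all [FtName.boxS]
    | @icomp_bbox b' y' h1 =>
        rcases h1 with h1 | h1
        · exact Or.inl (hC.2 _ (.icomp_bbox h1))
        · simp only [Set.mem_insert_iff, Set.mem_singleton_iff] at h1
          rcases h1 with h1 | h1 | h1 <;> simp_all [FtName.boxS]
    | @icomp_dia b' y' h1 =>
        rcases h1 with h1 | h1
        · exact Or.inl (hC.2 _ (.icomp_dia h1))
        · simp only [Set.mem_insert_iff, Set.mem_singleton_iff] at h1
          cases b' <;> rcases h1 with h1 | h1 | h1 <;>
            simp_all [FtName.boxS, ObName.diaS]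
    | @icomp_bdia b' y' h1 =>
        rcases h1 with h1 | h1
        · exact Or.inl (hC.2 _ (.icomp_bdia h1))
        · simp only [Set.mem_insert_iff, Set.mem_singleton_iff] at h1
          rcases h1 with h1 | h1 | h1 <;> simp_all [FtName.boxS]
    | neg_b h1 =>
        rcases h1 with h1 | h1
        · exact Or.inl (hC.2 _ (.neg_b h1))
        · simp [FtName.boxS] at h1
    | neg_x h1 =>
        rcases h1 with h1 | h1
        · exact Or.inl (hC.2 _ (.neg_x h1))
        · simp [FtName.boxS] at h1
    | app_x h1 =>
        rcases h1 with h1 | h1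
        · exact Or.inl (hC.2 _ (.app_x h1))
        · simp [FtName.boxS] at h1
    | app_a h1 =>
        rcases h1 with h1 | h1
        · exact Or.inl (hC.2 _ (.app_a h1))
        · simp [FtName.boxS] at h1
    | extra he h1 => exact absurd he id

/-- For any consistent LE-ALC ABox `A` and any individual
names `b`, `y` occurring in `A`, the tableaux completion of `A ∪ {b R_□ y}`
equals `Ā ∪ {b R_□ y, ◆b I y, b I □y}`, where `Ā` is the tableaux completion
of `A`. -/
theorem completion_add_rbox (A : Finset Term) (hwf : ABoxWF ↑A)
    (hcon : Consistent ↑A) (b : ObName) (y : FtName)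
    (hb : ObOccurs b ↑A) (hy : FtOccurs y ↑A) :
    Compl noExt (insert (Term.pos (.rbox b y)) ↑A) =
      Compl noExt ↑A ∪
        {Term.pos (.rbox b y), Term.pos (.rI (.bdia b) y),
          Term.pos (.rI b (FtName.boxS y))} := by
  obtain ⟨tb, htbA, htb⟩ := hb
  obtain ⟨ty, htyA, hty⟩ := hy
  obtain ⟨nb, rfl⟩ := (hwf tb htbA).1 b htb
  obtain ⟨ny, rfl⟩ := (hwf ty htyA).2 y hty
  have hocc : ∀ C : Cpt,
      Occurs C (insert (Term.pos (.rbox (.base nb) (.base ny))) (↑A : Set Term)) ↔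
        Occurs C (↑A : Set Term) := fun C => occurs_insert (t0 := Term.pos (.rbox (.base nb) (.base ny))) rfl
  have hC' := compl_closed noExt
    (insert (Term.pos (.rbox (.base nb) (.base ny))) (↑A : Set Term))
  apply Set.Subset.antisymm
  · exact compl_subset (closure_aux (↑A) nb ny)
  · apply Set.union_subset
    · apply compl_subset
      refine ⟨fun t ht => hC'.1 (Set.mem_insert_of_mem _ ht), fun t hd => ?_⟩
      exact hC'.2 t (deriv_congr (fun C => (hocc C).symm) hd)
    · have hT1 : Term.pos (.rbox (ObName.base nb) (FtName.base ny)) ∈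
          Compl noExt (insert (Term.pos (.rbox (.base nb) (.base ny))) (↑A : Set Term)) :=
        hC'.1 (Set.mem_insert _ _)
      intro t ht
      simp only [Set.mem_insert_iff, Set.mem_singleton_iff] at ht
      rcases ht with rfl | rfl | rfl
      · exact hT1
      · exact hC'.2 _ (.adj_box_l hT1)
      · exact hC'.2 _ (.adj_box_r hT1)

end LEALC
end

section
/- For any LE-ALC ABox A, any model M = (F, ·^M) of A can be extended to a model M' = (F', ·^{M'}) with F' = (A', X', I', {R_□'}, {R_◇'}), A ⊆ A' and X ⊆ X', such that: (1) for every concept C there exist a_C ∈ A' and x_C ∈ X' with C^{M'} = (I'^(0)[x_C^{M'}], I'^(1)[a_C^{M'}]), a_C^{M'} in the extent of C^{M'} and x_C^{M'} in the intent of C^{M'}; (2) for every individual b in A there exist ◇b and ◆b in A' with I'^(1)[◆b] = R_□'^(1)[b^{M'}] and I'^(1)[◇b] = R_◇'^(0)[b^{M'}]; (3) for every individual y in X there exist □y and ■y in X' with I'^(0)[■y] = R_◇'^(1)[y^{M'}] and I'^(0)[□y] = R_□'^(0)[y^{M'}]; (4) for any concept C, the extent of C^M equals the extent of C^{M'} intersected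 with A, and the intent of C^M equals the intent of C^{M'} intersected with X. -/
/-!
Adjoin to `M` a fresh object and a fresh feature for every formal concept of `M`; an old object
`a` stands for the concept it generates, an old feature `x` for `(x↓, x↓↑)`, and an object is
`I`-related to a feature when its concept lies below the feature's. `R_□` and `R_◇` are extended
through the box operator `[R]` and its left adjoint `⟨R⟩` on the concept lattice. Then every
concept `C` is interpreted in the extension by the objects below and the features above `C^M`,
so the fresh object and feature for `C^M` classify `C`, those for `◆b, ◇b, □y, ■y` are the
required witnesses, and old individuals keep their memberships because the concept generated by
`a` lies below `c` iff `a` is in the extent of `c`.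
-/

open Set Function Order

section Polars

variable {X Y P : Type*} [Preorder P] {φ : X → P} {ψ : Y → P} {rel : X → Y → Prop}

theorem lowerPolar_preimage_Ici {g : P → P} (hg : Monotone g) (hψ : Surjective ψ)
    (hrel : ∀ x y, rel x y ↔ φ x ≤ g (ψ y)) (c : P) :
    lowerPolar rel (ψ ⁻¹' Ici c) = φ ⁻¹' Iic (g c) := by
  ext x
  refine ⟨fun h => ?_, fun h y hy => (hrel x y).2 (h.trans (hg hy))⟩
  obtain ⟨y, rfl⟩ := hψ c
  exact (hrel x y).1 (h le_rfl)

theorem upperPolar_preimage_Iic {h : P → P} (hh : Monotone h) (hφ : Surjective φ)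
    (hrel : ∀ x y, rel x y ↔ h (φ x) ≤ ψ y) (c : P) :
    upperPolar rel (φ ⁻¹' Iic c) = ψ ⁻¹' Ici (h c) := by
  ext y
  refine ⟨fun hy => ?_, fun hy x hx => (hrel x y).2 ((hh hx).trans hy)⟩
  obtain ⟨x, rfl⟩ := hφ c
  exact (hrel x y).1 (hy le_rfl)

end Polars

namespace Concept

variable {α β : Type*} {r : α → β → Prop}

/-- The `I`-compatibility of `R_□` (and of the converse of `R_◇`). -/
structure IsCompatible (r R : α → β → Prop) : Prop where
  isExtent_setOf_rel : ∀ b, IsExtent r {a | R a b}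
  isIntent_setOf_rel : ∀ a, IsIntent r {b | R a b}

namespace IsCompatible

variable {R : α → β → Prop}

theorem isExtent_lowerPolar (h : IsCompatible r R) (t : Set β) :
    IsExtent r (lowerPolar R t) := by
  have e : lowerPolar R t = ⋂ b ∈ t, {a | R a b} := by ext; simp [mem_lowerPolar_iff]
  exact e ▸ IsExtent.iInter₂ _ fun b _ => h.isExtent_setOf_rel b

theorem isIntent_upperPolar (h : IsCompatible r R) (s : Set α) :
    IsIntent r (upperPolar R s) := by
  have e : upperPolar R s = ⋂ a ∈ s, {b | R a b} := by ext; simp [mem_upperPolar_iff]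
  exact e ▸ IsIntent.iInter₂ _ fun a _ => h.isIntent_setOf_rel a

end IsCompatible

variable (R : α → β → Prop)

def box (c : Concept α β r) : Concept α β r := ofObjects r (lowerPolar R c.intent)

def dia (c : Concept α β r) : Concept α β r := ofAttributes r (upperPolar R c.extent)

variable {R}

theorem extent_box (h : IsCompatible r R) (c : Concept α β r) :
    (box R c).extent = lowerPolar R c.intent :=
  extent_ofObjects_of_isExtent (h.isExtent_lowerPolar _)

theorem intent_dia (h : IsCompatible r R) (c : Concept α β r) :
    (dia R c).intent = upperPolar R c.extent :=
  intent_ofAttributes_of_isIntent (h.isIntent_upperPolar _)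

theorem gc_dia_box (h : IsCompatible r R) : GaloisConnection (dia R) (box (r := r) R) := by
  intro c d
  rw [← intent_subset_intent_iff, intent_dia h, ← extent_subset_extent_iff, extent_box h]
  exact subset_upperPolar_iff_subset_lowerPolar

theorem ofObject_le_box_ofAttribute_iff (h : IsCompatible r R) {a : α} {b : β} :
    ofObject r a ≤ box R (ofAttribute r b) ↔ R a b := by
  rw [ofObjects_le_iff, extent_box h, singleton_subset_iff, intent_ofAttributes]
  exact ⟨fun ha => ha (subset_upperPolar_lowerPolar r {b} rfl),
    fun hab => (h.isIntent_setOf_rel a).upperPolar_lowerPolar_subset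
      (singleton_subset_iff.2 hab)⟩

variable (r) in
def objConcept : α ⊕ Concept α β r → Concept α β r := Sum.elim (ofObject r) id

variable (r) in
def attrConcept : β ⊕ Concept α β r → Concept α β r := Sum.elim (ofAttribute r) id

theorem objConcept_surjective : Surjective (objConcept r) := fun c => ⟨.inr c, rfl⟩

theorem attrConcept_surjective : Surjective (attrConcept r) := fun c => ⟨.inr c, rfl⟩

variable (r) in
def extRel (o : α ⊕ Concept α β r) (f : β ⊕ Concept α β r) : Prop :=
  objConcept r o ≤ attrConcept r f

variable (R) in
def extLift (o : α ⊕ Concept α β r) (f : β ⊕ Concept α β r) : Prop :=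
  objConcept r o ≤ box R (attrConcept r f)

theorem lowerPolar_extRel_preimage_Ici (c : Concept α β r) :
    lowerPolar (extRel r) (attrConcept r ⁻¹' Ici c) = objConcept r ⁻¹' Iic c :=
  lowerPolar_preimage_Ici monotone_id attrConcept_surjective (fun _ _ => Iff.rfl) c

theorem upperPolar_extRel_preimage_Iic (c : Concept α β r) :
    upperPolar (extRel r) (objConcept r ⁻¹' Iic c) = attrConcept r ⁻¹' Ici c :=
  upperPolar_preimage_Iic monotone_id objConcept_surjective (fun _ _ => Iff.rfl) c

theorem isExtent_extRel_preimage_Iic (c : Concept α β r) :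
    IsExtent (extRel r) (objConcept r ⁻¹' Iic c) :=
  lowerPolar_extRel_preimage_Ici c ▸ isExtent_lowerPolar

theorem isIntent_extRel_preimage_Ici (c : Concept α β r) :
    IsIntent (extRel r) (attrConcept r ⁻¹' Ici c) :=
  upperPolar_extRel_preimage_Iic c ▸ isIntent_upperPolar

theorem lowerPolar_extRel_singleton_inr (c : Concept α β r) :
    lowerPolar (extRel r) {.inr c} = objConcept r ⁻¹' Iic c := by
  ext; exact mem_lowerPolar_singleton _

theorem upperPolar_extRel_singleton_inr (c : Concept α β r) :
    upperPolar (extRel r) {.inr c} = attrConcept r ⁻¹' Ici c := by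
  ext; exact mem_upperPolar_singleton _

theorem lowerPolar_extLift_preimage_Ici (h : IsCompatible r R) (c : Concept α β r) :
    lowerPolar (extLift R) (attrConcept r ⁻¹' Ici c) = objConcept r ⁻¹' Iic (box R c) :=
  lowerPolar_preimage_Ici (gc_dia_box h).monotone_u attrConcept_surjective
    (fun _ _ => Iff.rfl) c

theorem upperPolar_extLift_preimage_Iic (h : IsCompatible r R) (c : Concept α β r) :
    upperPolar (extLift R) (objConcept r ⁻¹' Iic c) = attrConcept r ⁻¹' Ici (dia R c) :=
  upperPolar_preimage_Iic (gc_dia_box h).monotone_l objConcept_surjective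
    (fun o f => ((gc_dia_box h) (objConcept r o) (attrConcept r f)).symm) c

theorem isCompatible_extLift (h : IsCompatible r R) :
    IsCompatible (extRel r) (extLift R) where
  isExtent_setOf_rel f := isExtent_extRel_preimage_Iic (box R (attrConcept r f))
  isIntent_setOf_rel o := by
    have e : {f | extLift R o f} = attrConcept r ⁻¹' Ici (dia R (objConcept r o)) := by
      ext f; exact ((gc_dia_box h) (objConcept r o) (attrConcept r f)).symm
    exact e ▸ isIntent_extRel_preimage_Ici _

end Concept

namespace LEALC

open Concept

theorem gup_eq_upperPolar {O F : Type} (I : O → F → Prop) (B : Set O) :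
    gup I B = upperPolar I B :=
  rfl

theorem gdn_eq_lowerPolar {O F : Type} (I : O → F → Prop) (Y : Set F) :
    gdn I Y = lowerPolar I Y :=
  rfl

theorem stableO_iff_isExtent {O F : Type} {I : O → F → Prop} {B : Set O} :
    StableO I B ↔ IsExtent I B :=
  isExtent_iff.symm

theorem stableF_iff_isIntent {O F : Type} {I : O → F → Prop} {Y : Set F} :
    StableF I Y ↔ IsIntent I Y :=
  isIntent_iff.symm

namespace Model

variable (M : Model)

theorem good_iff : M.Good ↔
    IsCompatible M.I M.Rb ∧ IsCompatible M.I (swap M.Rd) ∧ ∀ n, IsExtent M.I (M.vA n) := by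
  simp only [Good, stableO_iff_isExtent, stableF_iff_isIntent]
  exact ⟨fun ⟨h₁, h₂, h₃, h₄, h₅⟩ => ⟨⟨h₁, h₂⟩, ⟨h₄, h₃⟩, h₅⟩,
    fun ⟨⟨h₁, h₂⟩, ⟨h₄, h₃⟩, h₅⟩ => ⟨h₁, h₂, h₃, h₄, h₅⟩⟩

def concept : Cpt → Concept M.Ob M.Ft M.I
  | .atom n => ofObjects M.I (M.vA n)
  | .meet C₁ C₂ => concept C₁ ⊓ concept C₂
  | .join C₁ C₂ => concept C₁ ⊔ concept C₂
  | .box C => box M.Rb (concept C)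
  | .dia C => dia (swap M.Rd) (concept C)

theorem ci_eq_concept (hG : M.Good) (C : Cpt) :
    M.ci C = ((M.concept C).extent, (M.concept C).intent) := by
  obtain ⟨hRb, hRd, hvA⟩ := M.good_iff.1 hG
  induction C with
  | atom n => exact Prod.ext (hvA n).eq.symm rfl
  | meet C₁ C₂ ih₁ ih₂ => simp only [ci, concept, ih₁, ih₂]; rfl
  | join C₁ C₂ ih₁ ih₂ => simp only [ci, concept, ih₁, ih₂]; rfl
  | box C ih => simp only [ci, concept, ih, extent_box hRb]; rfl
  | dia C ih => simp only [ci, concept, ih, intent_dia hRd]; rfl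

abbrev extend : Model where
  Ob := M.Ob ⊕ Concept M.Ob M.Ft M.I
  Ft := M.Ft ⊕ Concept M.Ob M.Ft M.I
  I := extRel M.I
  Rb := extLift M.Rb
  Rd f o := extLift (swap M.Rd) o f
  oi := .inl ∘ M.oi
  fi := .inl ∘ M.fi
  vA n := objConcept M.I ⁻¹' Iic (ofObjects M.I (M.vA n))

theorem extend_good (hG : M.Good) : M.extend.Good := by
  obtain ⟨hRb, hRd, -⟩ := M.good_iff.1 hG
  exact M.extend.good_iff.2 ⟨isCompatible_extLift hRb, isCompatible_extLift hRd,
    fun _ => isExtent_extRel_preimage_Iic _⟩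

theorem ci_extend (hG : M.Good) (C : Cpt) :
    M.extend.ci C =
      (objConcept M.I ⁻¹' Iic (M.concept C), attrConcept M.I ⁻¹' Ici (M.concept C)) := by
  obtain ⟨hRb, hRd, -⟩ := M.good_iff.1 hG
  induction C with
  | atom n => exact Prod.ext rfl (upperPolar_extRel_preimage_Iic _)
  | meet C₁ C₂ ih₁ ih₂ =>
    simp only [ci, ih₁, ih₂]
    rw [← preimage_inter, Iic_inter_Iic]
    exact Prod.ext rfl (upperPolar_extRel_preimage_Iic _)
  | join C₁ C₂ ih₁ ih₂ =>
    simp only [ci, ih₁, ih₂]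
    rw [← preimage_inter, Ici_inter_Ici]
    exact Prod.ext (lowerPolar_extRel_preimage_Ici _) rfl
  | box C ih =>
    simp only [ci, ih]
    rw [gdn_eq_lowerPolar, lowerPolar_extLift_preimage_Ici hRb]
    exact Prod.ext rfl (upperPolar_extRel_preimage_Iic _)
  | dia C ih =>
    simp only [ci, ih]
    rw [gup_eq_upperPolar, upperPolar_extLift_preimage_Iic hRd]
    exact Prod.ext (lowerPolar_extRel_preimage_Ici _) rfl

theorem preimage_inl_extent_ci_extend (hG : M.Good) (C : Cpt) :
    Sum.inl ⁻¹' (M.extend.ci C).1 = (M.ci C).1 := by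
  ext a
  rw [ci_extend M hG, ci_eq_concept M hG]
  exact ofObjects_le_iff.trans singleton_subset_iff

theorem preimage_inl_intent_ci_extend (hG : M.Good) (C : Cpt) :
    Sum.inl ⁻¹' (M.extend.ci C).2 = (M.ci C).2 := by
  ext x
  rw [ci_extend M hG, ci_eq_concept M hG]
  exact le_ofAttributes_iff.trans singleton_subset_iff

theorem extend_sat_iff (hG : M.Good) (t : Term) : M.extend.Sat t ↔ M.Sat t := by
  obtain ⟨hRb, hRd, -⟩ := M.good_iff.1 hG
  have hP : ∀ p, M.extend.SatP p ↔ M.SatP p := by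
    rintro (⟨b, y⟩ | ⟨b, y⟩ | ⟨y, b⟩ | ⟨b, C⟩ | ⟨y, C⟩)
    · exact ofObject_le_ofAttribute_iff
    · exact ofObject_le_box_ofAttribute_iff hRb
    · exact ofObject_le_box_ofAttribute_iff hRd
    · exact Set.ext_iff.1 (M.preimage_inl_extent_ci_extend hG C) (M.oi b)
    · exact Set.ext_iff.1 (M.preimage_inl_intent_ci_extend hG C) (M.fi y)
  cases t with
  | pos p => exact hP p
  | neg p => exact not_congr (hP p)

end Model

theorem model_extension_general (A : Finset Term)
    (M : Model) (hG : M.Good) (hM : M.SatAll ↑A) :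
    ∃ (M' : Model) (ι : M.Ob → M'.Ob) (κ : M.Ft → M'.Ft),
      M'.Good ∧ M'.SatAll ↑A ∧
      Function.Injective ι ∧ Function.Injective κ ∧
      (∀ a x, M'.I (ι a) (κ x) ↔ M.I a x) ∧
      (∀ a x, M'.Rb (ι a) (κ x) ↔ M.Rb a x) ∧
      (∀ x a, M'.Rd (κ x) (ι a) ↔ M.Rd x a) ∧
      M'.oi = ι ∘ M.oi ∧ M'.fi = κ ∘ M.fi ∧
      (∀ C : Cpt, ∃ (aC : M'.Ob) (xC : M'.Ft),
        (Model.ci M' C).1 = gdn M'.I {xC} ∧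
        (Model.ci M' C).2 = gup M'.I {aC} ∧
        aC ∈ (Model.ci M' C).1 ∧ xC ∈ (Model.ci M' C).2) ∧
      (∀ b : M.Ob, ∃ diaB bdiaB : M'.Ob,
        gup M'.I {bdiaB} = {x | M'.Rb (ι b) x} ∧
        gup M'.I {diaB} = {x | M'.Rd x (ι b)}) ∧
      (∀ y : M.Ft, ∃ boxY bboxY : M'.Ft,
        gdn M'.I {bboxY} = {a | M'.Rd (κ y) a} ∧
        gdn M'.I {boxY} = {a | M'.Rb a (κ y)}) ∧
      (∀ C : Cpt,
        ι '' (Model.ci M C).1 = (Model.ci M' C).1 ∩ Set.range ι ∧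
        κ '' (Model.ci M C).2 = (Model.ci M' C).2 ∩ Set.range κ) := by
  obtain ⟨hRb, hRd, -⟩ := M.good_iff.1 hG
  refine ⟨M.extend, .inl, .inl, M.extend_good hG, fun t ht => (M.extend_sat_iff hG t).2 (hM t ht),
    Sum.inl_injective, Sum.inl_injective, fun _ _ => ofObject_le_ofAttribute_iff,
    fun _ _ => ofObject_le_box_ofAttribute_iff hRb, fun _ _ => ofObject_le_box_ofAttribute_iff hRd,
    rfl, rfl, fun C => ?_, fun b => ?_, fun y => ?_, fun C => ?_⟩
  · rw [M.ci_extend hG]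
    exact ⟨.inr (M.concept C), .inr (M.concept C), (lowerPolar_extRel_singleton_inr _).symm,
      (upperPolar_extRel_singleton_inr _).symm, le_refl (M.concept C), le_refl (M.concept C)⟩
  · refine ⟨.inr (dia (swap M.Rd) (ofObject M.I b)), .inr (dia M.Rb (ofObject M.I b)), ?_, ?_⟩
    · exact (upperPolar_extRel_singleton_inr _).trans (Set.ext fun _ => gc_dia_box hRb _ _)
    · exact (upperPolar_extRel_singleton_inr _).trans (Set.ext fun _ => gc_dia_box hRd _ _)
  · exact ⟨.inr (box M.Rb (ofAttribute M.I y)), .inr (box (swap M.Rd) (ofAttribute M.I y)),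
      lowerPolar_extRel_singleton_inr _, lowerPolar_extRel_singleton_inr _⟩
  · rw [← M.preimage_inl_extent_ci_extend hG, ← M.preimage_inl_intent_ci_extend hG]
    exact ⟨image_preimage_eq_inter_range, image_preimage_eq_inter_range⟩

/-- For any LE-ALC ABox `A`, any model `M` of `A` can be
extended to a model `M'` (over enlarged domains, witnessed by injections
`ι`, `κ` preserving the relations and the interpretations of the names)
such that:
(1) for every concept `C` there exist `a_C` and `x_C` with
    `C^{M'} = (I'^{(0)}[x_C], I'^{(1)}[a_C])`, `a_C` in the extent of `C^{M'}`
    and `x_C` in the intent of `C^{M'}`;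
(2) for every individual `b` of `M` there exist `◇b` and `◆b` in `M'` with
    `I'^{(1)}[◆b] = R_□'^{(1)}[b]` and `I'^{(1)}[◇b] = R_◇'^{(0)}[b]`;
(3) for every individual `y` of `M` there exist `□y` and `■y` in `M'` with
    `I'^{(0)}[■y] = R_◇'^{(1)}[y]` and `I'^{(0)}[□y] = R_□'^{(0)}[y]`;
(4) for any concept `C`, the extent (resp. intent) of `C^M` is the restriction
    of the extent (resp. intent) of `C^{M'}` to the old domain. -/
theorem model_extension (A : Finset Term) (hwf : ABoxWF ↑A)
    (M : Model) (hG : M.Good) (hM : M.SatAll ↑A) :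
    ∃ (M' : Model) (ι : M.Ob → M'.Ob) (κ : M.Ft → M'.Ft),
      M'.Good ∧ M'.SatAll ↑A ∧
      Function.Injective ι ∧ Function.Injective κ ∧
      (∀ a x, M'.I (ι a) (κ x) ↔ M.I a x) ∧
      (∀ a x, M'.Rb (ι a) (κ x) ↔ M.Rb a x) ∧
      (∀ x a, M'.Rd (κ x) (ι a) ↔ M.Rd x a) ∧
      M'.oi = ι ∘ M.oi ∧ M'.fi = κ ∘ M.fi ∧
      (∀ C : Cpt, ∃ (aC : M'.Ob) (xC : M'.Ft),
        (Model.ci M' C).1 = gdn M'.I {xC} ∧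
        (Model.ci M' C).2 = gup M'.I {aC} ∧
        aC ∈ (Model.ci M' C).1 ∧ xC ∈ (Model.ci M' C).2) ∧
      (∀ b : M.Ob, ∃ diaB bdiaB : M'.Ob,
        gup M'.I {bdiaB} = {x | M'.Rb (ι b) x} ∧
        gup M'.I {diaB} = {x | M'.Rd x (ι b)}) ∧
      (∀ y : M.Ft, ∃ boxY bboxY : M'.Ft,
        gdn M'.I {bboxY} = {a | M'.Rd (κ y) a} ∧
        gdn M'.I {boxY} = {a | M'.Rb a (κ y)}) ∧
      (∀ C : Cpt,
        ι '' (Model.ci M C).1 = (Model.ci M' C).1 ∩ Set.range ι ∧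
        κ '' (Model.ci M C).2 = (Model.ci M' C).2 ∩ Set.range κ) :=
  model_extension_general A M hG hM

end LEALC
end
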